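/- Entropy limit for binomial coefficients: let (m_n) be a sequence of natural numbers with m_n ≤ n for all n and m_n/n → p for some p ∈ [0,1]. Then (1/n)·log C(n, m_n) → H(p) as n → ∞, where C(n,m) is the binomial coefficient. -/

import Mathlib

open Filter

/-- The binary entropy function `H(p) = -p·log p - (1-p)·log(1-p)` (with the convention
`0·log 0 = 0`, automatic since `Real.log 0 = 0`). -/
noncomputable def binEntropy (p : ℝ) : ℝ := -p * Real.log p - (1 - p) * Real.log (1 - p)

/-- terms of the binomial expansion of `n^n = (m + (n-m))^n` are maximized at `k = m`. -/
lemma term_le_max (n m : ℕ) (hm : m ≤ n) (k : ℕ) :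
    n.choose k * m ^ k * (n - m) ^ (n - k) ≤ n.choose m * m ^ m * (n - m) ^ (n - m) := by
  set a : ℕ → ℕ := fun k => n.choose k * m ^ k * (n - m) ^ (n - k) with ha
  have up : ∀ k, k < m → a k ≤ a (k + 1) := by
    intro k hk
    rcases Nat.eq_or_lt_of_le hm with hmn | hmn
    · -- m = n : then n - m = 0 and n - k > 0, so a k = 0
      have h0 : m - k ≠ 0 := by omega
      simp [ha, ← hmn, zero_pow h0]
    · -- m < n, so k < n
      have hkn : k < n := lt_trans hk hmn
      have key : (k + 1) * (n - m) ≤ m * (n - k) := by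
        obtain ⟨d, hd⟩ := Nat.exists_eq_add_of_lt hk
        obtain ⟨e, he⟩ := Nat.exists_eq_add_of_le hm
        subst hd he
        have h1 : k + d + 1 + e - (k + d + 1) = e := by omega
        have h2 : k + d + 1 + e - k = d + 1 + e := by omega
        rw [h1, h2]
        nlinarith
      have hmul : a k * (k + 1) ≤ a (k + 1) * (k + 1) := by
        have e1 : a (k + 1) * (k + 1) =
            n.choose k * (n - k) * (m ^ k * m) * (n - m) ^ (n - (k + 1)) := by
          simp only [ha]
          rw [show n.choose (k+1) * m ^ (k+1) * (n-m) ^ (n-(k+1)) * (k+1)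
              = (n.choose (k+1) * (k+1)) * m ^ (k+1) * (n-m) ^ (n-(k+1)) by ring,
            Nat.choose_succ_right_eq, pow_succ]
          try ring
        have e2 : a k * (k + 1) =
            n.choose k * (k + 1) * m ^ k * ((n - m) ^ (n - (k + 1)) * (n - m)) := by
          simp only [ha]
          rw [show (n-m) ^ (n-(k+1)) * (n-m) = (n-m) ^ (n-k) by
            rw [← pow_succ]; congr 1; omega]
          ring
        rw [e1, e2]
        calc n.choose k * (k + 1) * m ^ k * ((n - m) ^ (n - (k + 1)) * (n - m))
            = n.choose k * m ^ k * (n - m) ^ (n - (k+1)) * ((k + 1) * (n - m)) := by ring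
          _ ≤ n.choose k * m ^ k * (n - m) ^ (n - (k+1)) * (m * (n - k)) :=
              Nat.mul_le_mul_left _ key
          _ = n.choose k * (n - k) * (m ^ k * m) * (n - m) ^ (n - (k + 1)) := by ring
      exact Nat.le_of_mul_le_mul_right hmul (Nat.succ_pos k)
  have down : ∀ k, m ≤ k → a (k + 1) ≤ a k := by
    intro k hk
    rcases Nat.lt_or_ge k n with hkn | hkn
    · rcases Nat.eq_zero_or_pos m with hm0 | hm0
      · subst hm0
        simp [ha, pow_succ]
      · have key : m * (n - k) ≤ (k + 1) * (n - m) := by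
          obtain ⟨d, hd⟩ := Nat.exists_eq_add_of_le hk
          obtain ⟨e, he⟩ := Nat.exists_eq_add_of_lt hkn
          subst hd he
          have h1 : m + d + e + 1 - (m + d) = e + 1 := by omega
          have h2 : m + d + e + 1 - m = d + e + 1 := by omega
          rw [h1, h2]
          nlinarith
        have hmul : a (k + 1) * (k + 1) ≤ a k * (k + 1) := by
          have e1 : a (k + 1) * (k + 1) =
              n.choose k * (n - k) * (m ^ k * m) * (n - m) ^ (n - (k + 1)) := by
            simp only [ha]
            rw [show n.choose (k+1) * m ^ (k+1) * (n-m) ^ (n-(k+1)) * (k+1)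
                = (n.choose (k+1) * (k+1)) * m ^ (k+1) * (n-m) ^ (n-(k+1)) by ring,
              Nat.choose_succ_right_eq, pow_succ]
            try ring
          have e2 : a k * (k + 1) =
              n.choose k * (k + 1) * m ^ k * ((n - m) ^ (n - (k + 1)) * (n - m)) := by
            simp only [ha]
            rw [show (n-m) ^ (n-(k+1)) * (n-m) = (n-m) ^ (n-k) by
              rw [← pow_succ]; congr 1; omega]
            ring
          rw [e1, e2]
          calc n.choose k * (n - k) * (m ^ k * m) * (n - m) ^ (n - (k + 1))
              = n.choose k * m ^ k * (n - m) ^ (n - (k+1)) * (m * (n - k)) := by ring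
            _ ≤ n.choose k * m ^ k * (n - m) ^ (n - (k+1)) * ((k + 1) * (n - m)) :=
                Nat.mul_le_mul_left _ key
            _ = n.choose k * (k + 1) * m ^ k * ((n - m) ^ (n - (k + 1)) * (n - m)) := by ring
        exact Nat.le_of_mul_le_mul_right hmul (Nat.succ_pos k)
    · have : n.choose (k + 1) = 0 := Nat.choose_eq_zero_of_lt (by omega)
      simp [ha, this]
  have upto : ∀ j, j ≤ m → a (m - j) ≤ a m := by
    intro j
    induction j with
    | zero => simp
    | succ j ih =>
      intro hj
      have h1 : m - (j + 1) < m := by omega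
      have h2 : m - (j + 1) + 1 = m - j := by omega
      calc a (m - (j + 1)) ≤ a (m - (j + 1) + 1) := up _ h1
        _ = a (m - j) := by rw [h2]
        _ ≤ a m := ih (by omega)
  have downto : ∀ j, a (m + j) ≤ a m := by
    intro j
    induction j with
    | zero => simp
    | succ j ih =>
      have := down (m + j) (Nat.le_add_right _ _)
      calc a (m + (j + 1)) = a (m + j + 1) := by ring_nf
        _ ≤ a (m + j) := this
        _ ≤ a m := ih
  rcases Nat.le_total k m with h | h
  · have := upto (m - k) (by omega)
    rwa [show m - (m - k) = k by omega] at this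
  · have := downto (k - m)
    rwa [show m + (k - m) = k by omega] at this

lemma sum_eq (n m : ℕ) (hm : m ≤ n) :
    ∑ k ∈ Finset.range (n + 1), n.choose k * m ^ k * (n - m) ^ (n - k) = n ^ n := by
  have h := add_pow m (n - m) n
  rw [Nat.add_sub_cancel' hm] at h
  rw [h]
  exact Finset.sum_congr rfl fun k _ => by simp only [Nat.cast_id]; ring

lemma choose_lower (n m : ℕ) (hm : m ≤ n) :
    n ^ n ≤ (n + 1) * (n.choose m * m ^ m * (n - m) ^ (n - m)) := by
  rw [← sum_eq n m hm]
  calc ∑ k ∈ Finset.range (n + 1), n.choose k * m ^ k * (n - m) ^ (n - k)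
      ≤ ∑ _k ∈ Finset.range (n + 1), n.choose m * m ^ m * (n - m) ^ (n - m) :=
        Finset.sum_le_sum fun k _ => term_le_max n m hm k
    _ = (n + 1) * (n.choose m * m ^ m * (n - m) ^ (n - m)) := by
        simp [Finset.sum_const, Finset.card_range]

lemma choose_upper (n m : ℕ) (hm : m ≤ n) :
    n.choose m * m ^ m * (n - m) ^ (n - m) ≤ n ^ n := by
  rw [← sum_eq n m hm]
  exact Finset.single_le_sum (f := fun k => n.choose k * m ^ k * (n - m) ^ (n - k))
    (fun k _ => Nat.zero_le _) (Finset.mem_range.2 (by omega))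

lemma pow_self_pos (m : ℕ) : 0 < m ^ m := by
  rcases Nat.eq_zero_or_pos m with h | h
  · simp [h]
  · exact pow_pos h _

lemma log_bounds (n m : ℕ) (hn : 1 ≤ n) (hm : m ≤ n) :
    (n : ℝ) * Real.log n - m * Real.log m - ((n - m : ℕ) : ℝ) * Real.log ((n - m : ℕ) : ℝ)
        - Real.log (n + 1) ≤ Real.log (n.choose m) ∧
    Real.log (n.choose m) ≤ (n : ℝ) * Real.log n - m * Real.log m
        - ((n - m : ℕ) : ℝ) * Real.log ((n - m : ℕ) : ℝ) := by
  have hc : 0 < n.choose m := Nat.choose_pos hm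
  have h1 : 0 < m ^ m := pow_self_pos m
  have h2 : 0 < (n - m) ^ (n - m) := pow_self_pos (n - m)
  have c0 : ((n.choose m : ℕ) : ℝ) ≠ 0 := Nat.cast_ne_zero.mpr hc.ne'
  have p0 : ((m ^ m : ℕ) : ℝ) ≠ 0 := Nat.cast_ne_zero.mpr h1.ne'
  have q0 : (((n - m) ^ (n - m) : ℕ) : ℝ) ≠ 0 := Nat.cast_ne_zero.mpr h2.ne'
  have key : Real.log ((n.choose m * m ^ m * (n - m) ^ (n - m) : ℕ) : ℝ) =
      Real.log (n.choose m) + (m : ℝ) * Real.log m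
        + ((n - m : ℕ) : ℝ) * Real.log ((n - m : ℕ) : ℝ) := by
    rw [Nat.cast_mul, Nat.cast_mul, Real.log_mul (mul_ne_zero c0 p0) q0,
      Real.log_mul c0 p0, Nat.cast_pow, Nat.cast_pow, Real.log_pow, Real.log_pow]
    try push_cast
    try ring
  have hnn : Real.log ((n ^ n : ℕ) : ℝ) = (n : ℝ) * Real.log n := by
    rw [Nat.cast_pow, Real.log_pow]
  constructor
  · have hle : ((n ^ n : ℕ) : ℝ)
        ≤ (((n + 1) * (n.choose m * m ^ m * (n - m) ^ (n - m)) : ℕ) : ℝ) := by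
      exact_mod_cast choose_lower n m hm
    have := Real.log_le_log (by positivity : (0:ℝ) < ((n ^ n : ℕ) : ℝ)) hle
    rw [hnn] at this
    rw [show (((n + 1) * (n.choose m * m ^ m * (n - m) ^ (n - m)) : ℕ) : ℝ)
        = ((n : ℝ) + 1) * ((n.choose m * m ^ m * (n - m) ^ (n - m) : ℕ) : ℝ) by
          push_cast; ring,
      Real.log_mul (by positivity)
        (Nat.cast_ne_zero.mpr (by positivity) :
          ((n.choose m * m ^ m * (n - m) ^ (n - m) : ℕ) : ℝ) ≠ 0),
      key] at this
    linarith
  · have hle : ((n.choose m * m ^ m * (n - m) ^ (n - m) : ℕ) : ℝ) ≤ ((n ^ n : ℕ) : ℝ) := by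
      exact_mod_cast choose_upper n m hm
    have := Real.log_le_log (by positivity :
        (0:ℝ) < ((n.choose m * m ^ m * (n - m) ^ (n - m) : ℕ) : ℝ)) hle
    rw [hnn, key] at this
    linarith

lemma mul_log_div (a b : ℝ) (ha : 0 ≤ a) (hb : 0 < b) :
    a * Real.log (a / b) = a * Real.log a - a * Real.log b := by
  rcases eq_or_lt_of_le ha with h | h
  · simp [← h]
  · rw [Real.log_div (ne_of_gt h) (ne_of_gt hb)]; ring

lemma entropy_eq (n m : ℕ) (hn : 1 ≤ n) (hm : m ≤ n) :
    (1 / n : ℝ) * ((n : ℝ) * Real.log n - m * Real.log m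
        - ((n - m : ℕ) : ℝ) * Real.log ((n - m : ℕ) : ℝ)) = binEntropy ((m : ℝ) / n) := by
  have hn0 : (0:ℝ) < n := by exact_mod_cast hn
  have hcast : ((n - m : ℕ) : ℝ) = (n : ℝ) - m := by
    rw [Nat.cast_sub hm]
  have h1q : 1 - (m : ℝ) / n = ((n : ℝ) - m) / n := by field_simp
  have hm0 : (0:ℝ) ≤ (m:ℝ) := Nat.cast_nonneg m
  have hnm0 : (0:ℝ) ≤ (n:ℝ) - m := by rw [← hcast]; exact Nat.cast_nonneg _
  rw [binEntropy, h1q]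
  have e1 : (m : ℝ) * Real.log ((m:ℝ) / n) = m * Real.log m - m * Real.log n :=
    mul_log_div _ _ hm0 hn0
  have e2 : ((n:ℝ) - m) * Real.log (((n:ℝ) - m) / n)
      = ((n:ℝ) - m) * Real.log ((n:ℝ) - m) - ((n:ℝ) - m) * Real.log n :=
    mul_log_div _ _ hnm0 hn0
  rw [hcast]
  field_simp
  nlinarith [e1, e2]

lemma binEntropy_continuous : Continuous binEntropy := by
  have c := Real.continuous_mul_log
  have h : binEntropy = fun x => -(x * Real.log x) - ((1 - x) * Real.log (1 - x)) := by
    funext x; unfold binEntropy; ring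
  rw [h]
  exact (c.neg).sub (c.comp (continuous_const.sub continuous_id))

lemma log_succ_div_tendsto :
    Tendsto (fun n : ℕ => Real.log (n + 1) / n) atTop (nhds 0) := by
  have h1 : Tendsto (fun x : ℝ => Real.log x / x) atTop (nhds 0) :=
    Real.isLittleO_log_id_atTop.tendsto_div_nhds_zero
  have h2 : Tendsto (fun n : ℕ => (n : ℝ) + 1) atTop atTop :=
    tendsto_atTop_add_const_right _ 1 tendsto_natCast_atTop_atTop
  have h3 : Tendsto (fun n : ℕ => Real.log ((n : ℝ) + 1) / ((n : ℝ) + 1)) atTop (nhds 0) :=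
    h1.comp h2
  have h4 : Tendsto (fun n : ℕ => ((n : ℝ) + 1) / n) atTop (nhds 1) := by
    have : Tendsto (fun n : ℕ => 1 / (n : ℝ)) atTop (nhds 0) := tendsto_one_div_atTop_nhds_zero_nat
    have h5 : Tendsto (fun n : ℕ => 1 + 1 / (n : ℝ)) atTop (nhds (1 + 0)) :=
      tendsto_const_nhds.add this
    rw [add_zero] at h5
    apply h5.congr'
    filter_upwards [eventually_ge_atTop 1] with n hn
    have hne : (n : ℝ) ≠ 0 := by simp only [ne_eq, Nat.cast_eq_zero]; omega
    rw [add_div, div_self hne]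
  have := h3.mul h4
  rw [zero_mul] at this
  apply this.congr'
  filter_upwards [eventually_ge_atTop 1] with n hn
  have hn0 : (n : ℝ) ≠ 0 := by simp only [ne_eq, Nat.cast_eq_zero]; omega
  have hn1 : (n : ℝ) + 1 ≠ 0 := by positivity
  field_simp

/-- Entropy limit for binomial coefficients: if `m n ≤ n` and `m n / n → p ∈ [0,1]`,
then `(1/n)·log C(n, m n) → H(p)`. -/
theorem binomial_entropy_limit (m : ℕ → ℕ) (hm : ∀ n, m n ≤ n) (p : ℝ)
    (hp0 : 0 ≤ p) (hp1 : p ≤ 1)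
    (hlim : Tendsto (fun n : ℕ => (m n : ℝ) / n) atTop (nhds p)) :
    Tendsto (fun n : ℕ => (1 / n : ℝ) * Real.log (n.choose (m n)))
      atTop (nhds (binEntropy p)) := by
  have hH : Tendsto (fun n : ℕ => binEntropy ((m n : ℝ) / n)) atTop (nhds (binEntropy p)) :=
    (binEntropy_continuous.tendsto p).comp hlim
  have hlow : Tendsto (fun n : ℕ => binEntropy ((m n : ℝ) / n) - Real.log (n + 1) / n)
      atTop (nhds (binEntropy p)) := by
    have := hH.sub log_succ_div_tendsto
    rwa [sub_zero] at this
  refine tendsto_of_tendsto_of_tendsto_of_le_of_le' hlow hH ?_ ?_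
  · filter_upwards [eventually_ge_atTop 1] with n hn
    have hb := (log_bounds n (m n) hn (hm n)).1
    have he := entropy_eq n (m n) hn (hm n)
    have hn0 : (0:ℝ) < (n:ℝ) := by exact_mod_cast hn
    have h1n : (0:ℝ) < 1 / (n:ℝ) := by positivity
    have := mul_le_mul_of_nonneg_left hb h1n.le
    rw [mul_sub, he] at this
    have heq : 1 / (n:ℝ) * Real.log (↑n + 1) = Real.log (↑n + 1) / n := by ring
    rw [heq] at this
    exact this
  · filter_upwards [eventually_ge_atTop 1] with n hn
    have hb := (log_bounds n (m n) hn (hm n)).2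
    have he := entropy_eq n (m n) hn (hm n)
    have hn0 : (0:ℝ) < (n:ℝ) := by exact_mod_cast hn
    have h1n : (0:ℝ) < 1 / (n:ℝ) := by positivity
    have := mul_le_mul_of_nonneg_left hb h1n.le
    rwa [he] at this
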